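/- arXiv:math/9604237 — 2 statements merged into one kernel-verified Lean document; each statement's English description precedes it below -/
import Mathlib

section
/- The subspace {(v_x, v_y) ∈ ℂ² : v_x = i v_y} (alternating pulsating waves) is invariant under the D4-Hopf normal form flow, and on it the equation for v := v_y reduces to v̇ = ((λ + iω) + (2A + B)|v|²)v - C v̄ v². -/
open Complex

/-- x-component of the D₄-Hopf normal form vector field. -/
noncomputable def hopfFx (lam om : ℝ) (A B C : ℂ) (vx vy : ℂ) : ℂ :=
  (((lam : ℂ) + (om : ℂ) * I) + A * ((normSq vx : ℂ) + (normSq vy : ℂ))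
      + B * (normSq vx : ℂ)) * vx + C * (starRingEnd ℂ) vx * vy ^ 2

/-- y-component of the D₄-Hopf normal form vector field. -/
noncomputable def hopfFy (lam om : ℝ) (A B C : ℂ) (vx vy : ℂ) : ℂ :=
  (((lam : ℂ) + (om : ℂ) * I) + A * ((normSq vx : ℂ) + (normSq vy : ℂ))
      + B * (normSq vy : ℂ)) * vy + C * (starRingEnd ℂ) vy * vx ^ 2

/-- Algebraic decomposition of `Fx - I·Fy` into a linear combination of
`u = x - I y` and its conjugate. -/
lemma hopf_alg (lam om : ℝ) (A B C x y : ℂ) :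
    hopfFx lam om A B C x y - I * hopfFy lam om A B C x y
      = (((lam : ℂ) + (om : ℂ) * I) + A * ((normSq x : ℂ) + (normSq y : ℂ))
            + (B * (starRingEnd ℂ) x - C * I * (starRingEnd ℂ) y) * (x + I * y)) * (x - I * y)
          + (B - C) * (I * y) ^ 2 * (starRingEnd ℂ) (x - I * y) := by
  simp only [hopfFx, hopfFy, ← Complex.mul_conj, map_sub, map_mul, Complex.conj_I]
  linear_combination (C * (starRingEnd ℂ) x * y ^ 2
      - B * I * (starRingEnd ℂ) y * y ^ 2) * Complex.I_sq

/-- If `u` solves `u' = g` with `‖g t‖ ≤ K t * ‖u t‖` for a continuous `K`, and `u 0 = 0`,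
then `u ≡ 0`. -/
lemma zero_of_deriv_bound (u g : ℝ → ℂ) (K : ℝ → ℝ)
    (hu : ∀ t, HasDerivAt u (g t) t) (hK : Continuous K)
    (hb : ∀ t, ‖g t‖ ≤ K t * ‖u t‖) (h0 : u 0 = 0) : ∀ t, u t = 0 := by
  have fwd : ∀ (u g : ℝ → ℂ) (K : ℝ → ℝ), (∀ t, HasDerivAt u (g t) t) → Continuous K →
      (∀ t, ‖g t‖ ≤ K t * ‖u t‖) → u 0 = 0 → ∀ t ≥ 0, u t = 0 := by
    intro u g K hu hK hb h0 t ht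
    obtain ⟨K₀, hK₀⟩ : ∃ K₀, ∀ s ∈ Set.Icc (0:ℝ) t, K s ≤ K₀ := by
      obtain ⟨x, -, hx⟩ := isCompact_Icc.exists_isMaxOn (Set.nonempty_Icc.mpr ht)
        (hK.continuousOn (s := Set.Icc 0 t))
      exact ⟨K x, hx⟩
    have key := norm_le_gronwallBound_of_norm_deriv_right_le (f := u) (f' := g)
      (δ := 0) (K := K₀) (ε := 0) (a := 0) (b := t)
      (fun s _ => ((hu s).continuousAt).continuousWithinAt)
      (fun s _ => ((hu s).hasDerivWithinAt))
      (by simp [h0]) ?_ t ⟨ht, le_refl t⟩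
    · rw [gronwallBound_ε0_δ0] at key
      simpa using norm_le_zero_iff.mp key
    · intro s hs
      calc ‖g s‖ ≤ K s * ‖u s‖ := hb s
        _ ≤ K₀ * ‖u s‖ :=
            mul_le_mul_of_nonneg_right (hK₀ s (Set.Ico_subset_Icc_self hs)) (norm_nonneg _)
        _ = K₀ * ‖u s‖ + 0 := by ring
  intro t
  rcases le_or_gt 0 t with ht | ht
  · exact fwd u g K hu hK hb h0 t ht
  · have hneg : ∀ s, HasDerivAt (fun x => u (-x)) ((-1 : ℝ) • g (-s)) s := fun s =>
      (hu (-s)).scomp s (hasDerivAt_neg s)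
    have := fwd (fun x => u (-x)) (fun x => (-1 : ℝ) • g (-x)) (fun x => K (-x))
      hneg (hK.comp continuous_neg)
      (fun s => by simpa using hb (-s)) (by simpa using h0) (-t) (by linarith)
    simpa using this

/-- The alternating-pulsating-waves subspace `{vx = i vy}` is invariant under the
D₄-Hopf normal form flow, and on it the equation for `v := vy` reduces to
`v̇ = ((λ+iω) + (2A+B)|v|²)v - C v̄ v²`. -/
theorem stmt_14 (lam om : ℝ) (A B C : ℂ) :
    (∀ vx vy : ℝ → ℂ,
      (∀ t, HasDerivAt vx (hopfFx lam om A B C (vx t) (vy t)) t) →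
      (∀ t, HasDerivAt vy (hopfFy lam om A B C (vx t) (vy t)) t) →
      vx 0 = I * vy 0 → ∀ t, vx t = I * vy t) ∧
    (∀ v : ℂ,
      hopfFy lam om A B C (I * v) v
        = (((lam : ℂ) + (om : ℂ) * I) + (2 * A + B) * (normSq v : ℂ)) * v
            - C * (starRingEnd ℂ) v * v ^ 2) := by
  constructor
  · intro vx vy hvx hvy h0 t
    set u : ℝ → ℂ := fun t => vx t - I * vy t with hu_def
    set g : ℝ → ℂ := fun t =>
      hopfFx lam om A B C (vx t) (vy t) - I * hopfFy lam om A B C (vx t) (vy t) with hg_def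
    set P : ℝ → ℂ := fun t =>
      (((lam : ℂ) + (om : ℂ) * I) + A * ((normSq (vx t) : ℂ) + (normSq (vy t) : ℂ))
          + (B * (starRingEnd ℂ) (vx t) - C * I * (starRingEnd ℂ) (vy t))
            * (vx t + I * vy t)) with hP_def
    set Q : ℝ → ℂ := fun t => (B - C) * (I * vy t) ^ 2 with hQ_def
    have hu : ∀ s, HasDerivAt u (g s) s := fun s =>
      (hvx s).sub ((hvy s).const_mul I)
    have hcx : Continuous vx := continuous_iff_continuousAt.mpr fun s => (hvx s).continuousAt
    have hcy : Continuous vy := continuous_iff_continuousAt.mpr fun s => (hvy s).continuousAt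
    have hKc : Continuous (fun s => ‖P s‖ + ‖Q s‖) := by
      apply Continuous.add
      · exact (by continuity : Continuous P).norm
      · exact (by continuity : Continuous Q).norm
    have hb : ∀ s, ‖g s‖ ≤ (‖P s‖ + ‖Q s‖) * ‖u s‖ := by
      intro s
      have hgPQ : g s = P s * u s + Q s * (starRingEnd ℂ) (u s) :=
        hopf_alg lam om A B C (vx s) (vy s)
      rw [hgPQ]
      calc ‖P s * u s + Q s * (starRingEnd ℂ) (u s)‖
          ≤ ‖P s * u s‖ + ‖Q s * (starRingEnd ℂ) (u s)‖ := norm_add_le _ _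
        _ = ‖P s‖ * ‖u s‖ + ‖Q s‖ * ‖u s‖ := by
            rw [norm_mul, norm_mul, RCLike.norm_conj]
        _ = (‖P s‖ + ‖Q s‖) * ‖u s‖ := by ring
    have h00 : u 0 = 0 := by simp [hu_def, h0]
    have := zero_of_deriv_bound u g (fun s => ‖P s‖ + ‖Q s‖) hu hKc hb h00 t
    exact sub_eq_zero.mp this
  · intro v
    simp only [hopfFy, normSq_mul, normSq_I, one_mul, mul_pow, I_sq]
    ring
end

section
/- In the model (3.6)–(3.11), the square solution with |a_x|² = |a_y|² = μ/(2+β), c_x = c_y = d_x = d_y = 0 loses stability in a pitchfork bifurcation of the shear modes exactly when μ = (1+Q)(2+β): the 2×2 linearization matrix [[|a|² - 1, -Q],[ζ, -ζ]] of the (c_x, d_x) subsystem about the square state has a zero eigenvalue iff μ = (1+Q)(2+β), and has a pair of purely imaginary eigenvalues iff μ = (1+ζ)(2+β) and Q > ζ. -/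
open Complex Matrix

/-!
A 2×2 matrix `A` has a zero eigenvalue iff `det A = 0`, and a nonzero purely imaginary
eigenvalue `i b` iff `(i b)² - tr A · i b + det A = 0`, i.e. iff `tr A = 0` and `det A = b² > 0`.
For the shear matrix, `det = ζ (1 + Q - μ/(2+β))` and `tr = μ/(2+β) - 1 - ζ`; with `ζ > 0` the
first vanishes iff `μ = (1+Q)(2+β)`, and when the trace vanishes the determinant is `ζ (Q - ζ)`.
-/

/-- Linearization of the shear subsystem `(cx, dx)` about the square state
`|a|² = μ/(2+β)` in the model (3.6)–(3.11). -/
noncomputable def shearMatrix (μ β Q ζ : ℝ) : Matrix (Fin 2) (Fin 2) ℝ :=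
  !![μ / (2 + β) - 1, -Q; ζ, -ζ]

namespace Matrix

theorem det_smul_one_sub_fin_two {R : Type*} [CommRing R] (A : Matrix (Fin 2) (Fin 2) R)
    (t : R) : (t • (1 : Matrix (Fin 2) (Fin 2) R) - A).det = t ^ 2 - A.trace * t + A.det := by
  simp only [det_fin_two, trace_fin_two, sub_apply, smul_apply, one_apply_eq,
    one_apply_ne (show (0 : Fin 2) ≠ 1 by decide), one_apply_ne (show (1 : Fin 2) ≠ 0 by decide),
    smul_eq_mul, mul_one, mul_zero]
  ring

theorem exists_mulVec_eq_smul_iff_det {K n : Type*} [Field K] [Fintype n] [DecidableEq n]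
    (A : Matrix n n K) (t : K) :
    (∃ x ≠ 0, A *ᵥ x = t • x) ↔ (t • (1 : Matrix n n K) - A).det = 0 := by
  rw [← exists_mulVec_eq_zero_iff]
  refine exists_congr fun x => and_congr_right fun _ => ?_
  rw [sub_mulVec, smul_mulVec, one_mulVec, sub_eq_zero, eq_comm]

theorem exists_imaginary_eigenvalue_iff_fin_two (A : Matrix (Fin 2) (Fin 2) ℝ) :
    (∃ b : ℝ, b ≠ 0 ∧ ∃ x : Fin 2 → ℂ, x ≠ 0 ∧
        (A.map (fun r : ℝ => (r : ℂ))).mulVec x = (I * (b : ℂ)) • x) ↔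
      A.trace = 0 ∧ 0 < A.det := by
  have hdet : ∀ b : ℝ, ((I * b) • (1 : Matrix (Fin 2) (Fin 2) ℂ) - A.map ofReal).det =
      ⟨A.det - b ^ 2, -(A.trace * b)⟩ := by
    intro b
    rw [det_smul_one_sub_fin_two]
    apply Complex.ext
    · simp [trace_fin_two, det_fin_two, pow_two]; ring
    · simp [trace_fin_two, det_fin_two, pow_two]
  simp only [exists_mulVec_eq_smul_iff_det, hdet, Complex.ext_iff, zero_re, zero_im,
    sub_eq_zero, neg_eq_zero, mul_eq_zero]
  constructor
  · rintro ⟨b, hb, hdet_eq, htr | rfl⟩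
    · exact ⟨htr, hdet_eq ▸ by positivity⟩
    · exact absurd rfl hb
  · rintro ⟨htr, hdet_pos⟩
    exact ⟨√A.det, (Real.sqrt_pos.mpr hdet_pos).ne', (Real.sq_sqrt hdet_pos.le).symm, .inl htr⟩

end Matrix

theorem shearMatrix_det (μ β Q ζ : ℝ) :
    (shearMatrix μ β Q ζ).det = ζ * (1 + Q - μ / (2 + β)) := by
  rw [shearMatrix, det_fin_two_of]; ring

theorem shearMatrix_trace (μ β Q ζ : ℝ) :
    (shearMatrix μ β Q ζ).trace = μ / (2 + β) - 1 - ζ := by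
  rw [shearMatrix, trace_fin_two_of]; ring

theorem stmt_19_general (μ β Q ζ : ℝ) (hβ : 0 < 2 + β) (hζ : 0 < ζ) :
    ((∃ x : Fin 2 → ℝ, x ≠ 0 ∧ (shearMatrix μ β Q ζ).mulVec x = 0) ↔
      μ = (1 + Q) * (2 + β)) ∧
    ((∃ b : ℝ, b ≠ 0 ∧ ∃ x : Fin 2 → ℂ, x ≠ 0 ∧
        ((shearMatrix μ β Q ζ).map (fun r : ℝ => (r : ℂ))).mulVec x
          = (Complex.I * (b : ℂ)) • x) ↔
      (μ = (1 + ζ) * (2 + β) ∧ Q > ζ)) := by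
  have hdiv : ∀ c : ℝ, μ / (2 + β) = c ↔ μ = c * (2 + β) := fun c => div_eq_iff hβ.ne'
  refine ⟨?_, ?_⟩
  · simp only [exists_mulVec_eq_zero_iff, shearMatrix_det, mul_eq_zero,
      hζ.ne', false_or, sub_eq_zero, eq_comm (a := 1 + Q), hdiv]
  · rw [exists_imaginary_eigenvalue_iff_fin_two, shearMatrix_det, shearMatrix_trace,
      sub_sub, sub_eq_zero, hdiv]
    refine and_congr_right fun hμ => ?_
    rw [(hdiv _).mpr hμ, show 1 + Q - (1 + ζ) = Q - ζ by ring, mul_pos_iff_of_pos_left hζ,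
      sub_pos, gt_iff_lt]

/-- The square state of the model loses stability in a pitchfork bifurcation of the
shear modes exactly when `μ = (1+Q)(2+β)`: the linearization of the `(cx, dx)`
subsystem has a zero eigenvalue iff `μ = (1+Q)(2+β)`, and a pair of purely imaginary
eigenvalues iff `μ = (1+ζ)(2+β)` and `Q > ζ`. -/
theorem stmt_19 (μ β Q ζ : ℝ) (hβ : 0 < 2 + β) (hζ : 0 < ζ) (hQ : 0 < Q) :
    ((∃ x : Fin 2 → ℝ, x ≠ 0 ∧ (shearMatrix μ β Q ζ).mulVec x = 0) ↔
      μ = (1 + Q) * (2 + β)) ∧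
    ((∃ b : ℝ, b ≠ 0 ∧ ∃ x : Fin 2 → ℂ, x ≠ 0 ∧
        ((shearMatrix μ β Q ζ).map (fun r : ℝ => (r : ℂ))).mulVec x
          = (Complex.I * (b : ℂ)) • x) ↔
      (μ = (1 + ζ) * (2 + β) ∧ Q > ζ)) :=
  stmt_19_general μ β Q ζ hβ hζ
end
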